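/- arXiv:cond-mat/0405662 — 3 statements merged into one kernel-verified Lean document; each statement's English description precedes it below -/
import Mathlib

section
/- For every natural number n ≥ 1: for each i with 1 ≤ i ≤ n−1, the number of hub vertices of G_n whose degree in G_n equals 2^{i+1} − 2 is exactly 2·3^{n−1−i}; moreover the root r_n is the unique hub vertex of degree 2^{n+1} − 2, and every hub vertex of G_n has degree 2^{i+1} − 2 for some i with 1 ≤ i ≤ n. -/
/-!
Deleting the first coordinate of a hub other than the root does not change its degree: the
extra edges of the root only reach leaves, and a hub is never a leaf. Iterating, a hub whose
last `i` coordinates vanish (and no more) has the degree of the root of `G i`, which gains the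
`2 ^ i` leaves of the two outer copies at each generation and so equals `2 ^ (i + 1) - 2`.
The hubs of `G (n + 1)` of degree `2 ^ (i + 1) - 2` are therefore the three copies of those of
`G n` when `i < n`, and the two vertices `(t, root n)` with `t ≠ 0` when `i = n`.
-/

namespace DSFN

/-- Vertex set of the `n`-th generation graph `G n` of the Barabási–Ravasz–Vicsek
deterministic scale-free network: `Fin n → Fin 3`, which is canonically
`{0,1,2} × V(G (n-1))` (first coordinate = which of the three copies). -/
abbrev Vert (n : ℕ) : Type := Fin n → Fin 3

/-- The root of `G n`: the all-zero vertex. -/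
def root (n : ℕ) : Vert n := fun _ => 0

/-- The leaf set of `G n`: recursively, leaves of `G n` are the vertices `(t, ℓ)` with
`t ∈ {1,2}` and `ℓ` a leaf of `G (n-1)`; equivalently all coordinates are nonzero. -/
def IsLeaf {n : ℕ} (v : Vert n) : Prop := ∀ i, v i ≠ 0

/-- The hub vertices of `G n`: the unique hub of `G 1` is the root `0`, and the hubs of
`G n` are the vertices `(t, h)` with `h` a hub of `G (n-1)`; equivalently the last
coordinate vanishes. All other vertices are rim vertices. -/
def IsHub {n : ℕ} (v : Vert n) : Prop := ∀ i : Fin n, (i : ℕ) + 1 = n → v i = 0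

/-- Adjacency in `G n` : each of the three copies of `G (n-1)` is an induced subgraph,
and in addition the root is joined to every vertex `(t, ℓ)` with `t ∈ {1,2}` and
`ℓ` a leaf of `G (n-1)`. -/
def Adj : (n : ℕ) → Vert n → Vert n → Prop
  | 0 => fun _ _ => False
  | n + 1 => fun u v =>
      (u 0 = v 0 ∧ Adj n (Fin.tail u) (Fin.tail v)) ∨
      (u = root (n + 1) ∧ (v 0 = 1 ∨ v 0 = 2) ∧ IsLeaf (Fin.tail v)) ∨
      (v = root (n + 1) ∧ (u 0 = 1 ∨ u 0 = 2) ∧ IsLeaf (Fin.tail u))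

instance instDecIsLeaf {n : ℕ} : DecidablePred (IsLeaf (n := n)) := fun v =>
  inferInstanceAs (Decidable (∀ i, v i ≠ 0))

instance instDecIsHub {n : ℕ} : DecidablePred (IsHub (n := n)) := fun v =>
  inferInstanceAs (Decidable (∀ i : Fin n, (i : ℕ) + 1 = n → v i = 0))

instance instDecAdj : (n : ℕ) → DecidableRel (Adj n)
  | 0 => fun _ _ => inferInstanceAs (Decidable False)
  | n + 1 => fun u v =>
      letI := instDecAdj n
      inferInstanceAs (Decidable
        ((u 0 = v 0 ∧ Adj n (Fin.tail u) (Fin.tail v)) ∨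
        (u = root (n + 1) ∧ (v 0 = 1 ∨ v 0 = 2) ∧ IsLeaf (Fin.tail v)) ∨
        (v = root (n + 1) ∧ (u 0 = 1 ∨ u 0 = 2) ∧ IsLeaf (Fin.tail u))))

theorem adj_symm : ∀ (n : ℕ) (u v : Vert n), Adj n u v → Adj n v u
  | 0, _, _, h => h.elim
  | n + 1, _, _, h =>
      h.elim (fun h1 => Or.inl ⟨h1.1.symm, adj_symm n _ _ h1.2⟩)
        (fun h2 => h2.elim (fun a => Or.inr (Or.inr a)) (fun a => Or.inr (Or.inl a)))

theorem adj_irrefl : (n : ℕ) → ∀ v : Vert n, ¬ Adj n v v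
  | 0 => fun _ h => h
  | n + 1 => by
      intro v h
      rcases h with ⟨-, h2⟩ | ⟨h1, h2, -⟩ | ⟨h1, h2, -⟩
      · exact adj_irrefl n (Fin.tail v) h2
      · rw [h1] at h2
        exact h2.elim (fun c => absurd c (by simp [root])) (fun c => absurd c (by simp [root]))
      · rw [h1] at h2
        exact h2.elim (fun c => absurd c (by simp [root])) (fun c => absurd c (by simp [root]))

/-- The `n`-th generation of the Barabási–Ravasz–Vicsek deterministic scale-free
network, as a simple graph (for `n ≥ 1`; `G 0` is the trivial one-vertex graph). -/
def G (n : ℕ) : SimpleGraph (Vert n) where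
  Adj := Adj n
  symm := ⟨fun u v h => adj_symm n u v h⟩
  loopless := ⟨fun v h => adj_irrefl n v h⟩

instance (n : ℕ) : DecidableRel (G n).Adj := instDecAdj n

end DSFN

open Finset

theorem Fin.card_filter_head_and_tail {α : Type*} [Fintype α] {n : ℕ} (p : α → Prop)
    (q : (Fin n → α) → Prop) [DecidablePred p] [DecidablePred q] :
    #{w : Fin (n + 1) → α | p (w 0) ∧ q (Fin.tail w)} = #{a | p a} * #{u | q u} := by
  rw [← card_product, ← filter_product, univ_product_univ,
    ← card_map (Fin.consEquiv fun _ => α).toEmbedding, map_filter]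
  congr 1
  ext w
  simp [Fin.consEquiv]

theorem strictMono_two_pow_succ_sub_two : StrictMono fun i : ℕ => 2 ^ (i + 1) - 2 := by
  intro a b hab
  have hlt : 2 ^ (a + 1) < 2 ^ (b + 1) := Nat.pow_lt_pow_right one_lt_two (by omega)
  have hge : 2 ≤ 2 ^ (a + 1) := by rw [pow_succ]; have := Nat.one_le_two_pow (n := a); omega
  dsimp only
  omega

namespace DSFN

theorem eq_root_iff {n : ℕ} {v : Vert (n + 1)} :
    v = root (n + 1) ↔ v 0 = 0 ∧ Fin.tail v = root n := by
  refine ⟨by rintro rfl; exact ⟨rfl, rfl⟩, fun ⟨h0, ht⟩ => ?_⟩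
  rw [← Fin.cons_self_tail v, h0, ht]
  funext i
  cases i using Fin.cases <;> rfl

theorem root_isHub (n : ℕ) : IsHub (root n) := fun _ _ => rfl

theorem isHub_iff_apply_last {n : ℕ} {v : Vert (n + 1)} : IsHub v ↔ v (Fin.last n) = 0 :=
  ⟨fun h => h _ rfl, fun h i hi => by
    rwa [show i = Fin.last n from Fin.ext (by simpa using hi)]⟩

theorem isHub_tail_iff {n : ℕ} {v : Vert (n + 2)} : IsHub (Fin.tail v) ↔ IsHub v := by
  rw [isHub_iff_apply_last, isHub_iff_apply_last]
  rfl

theorem eq_root_one_of_isHub {v : Vert 1} (hv : IsHub v) : v = root 1 :=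
  funext fun i => hv i (by omega)

theorem not_isLeaf_of_isHub {n : ℕ} {v : Vert (n + 1)} (hv : IsHub v) : ¬ IsLeaf v :=
  fun hl => hl _ (isHub_iff_apply_last.1 hv)

theorem card_isLeaf (n : ℕ) : #{v : Vert n | IsLeaf v} = 2 ^ n := by
  have : univ.filter (IsLeaf (n := n)) = Fintype.piFinset fun _ => univ.erase 0 := by
    ext v
    simp [IsLeaf]
  rw [this, Fintype.card_piFinset]
  simp

theorem degree_eq_card_filter_adj {n : ℕ} (v : Vert n) : (G n).degree v = #{w | Adj n v w} := by
  rw [← SimpleGraph.card_neighborFinset_eq_degree, SimpleGraph.neighborFinset_eq_filter]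
  rfl

theorem degree_root_succ (n : ℕ) :
    (G (n + 1)).degree (root (n + 1)) = (G n).degree (root n) + 2 ^ (n + 1) := by
  have hadj : ∀ w : Vert (n + 1), Adj (n + 1) (root (n + 1)) w ↔
      (w 0 = 0 ∧ Adj n (root n) (Fin.tail w)) ∨ (w 0 ≠ 0 ∧ IsLeaf (Fin.tail w)) := by
    have h12 : ∀ a : Fin 3, a = 1 ∨ a = 2 ↔ a ≠ 0 := by decide
    intro w
    simp [Adj, root, h12, eq_comm]
    rfl
  rw [degree_eq_card_filter_adj, filter_congr fun w _ => hadj w, filter_or,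
    card_union_of_disjoint (disjoint_filter.2 fun w _ h h' => h'.1 h.1),
    Fin.card_filter_head_and_tail (· = 0) (Adj n (root n)),
    Fin.card_filter_head_and_tail (· ≠ 0) IsLeaf, card_isLeaf, degree_eq_card_filter_adj]
  have hzero : #{a : Fin 3 | a = 0} = 1 := by decide
  have hnonzero : #{a : Fin 3 | a ≠ 0} = 2 := by decide
  rw [hzero, hnonzero]
  ring

theorem degree_root (n : ℕ) : (G n).degree (root n) = 2 ^ (n + 1) - 2 := by
  induction n with
  | zero => simp
  | succ n ih =>
    rw [degree_root_succ, ih, pow_succ 2 (n + 1)]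
    have := Nat.one_le_two_pow (n := n)
    omega

theorem degree_eq_degree_tail {n : ℕ} {v : Vert (n + 1)} (hv : v ≠ root (n + 1))
    (hl : ¬ IsLeaf (Fin.tail v)) : (G (n + 1)).degree v = (G n).degree (Fin.tail v) := by
  have hadj : ∀ w : Vert (n + 1),
      Adj (n + 1) v w ↔ w 0 = v 0 ∧ Adj n (Fin.tail v) (Fin.tail w) := by
    simp [Adj, hv, hl, eq_comm]
  rw [degree_eq_card_filter_adj, filter_congr fun w _ => hadj w,
    Fin.card_filter_head_and_tail (· = v 0) (Adj n (Fin.tail v)), degree_eq_card_filter_adj,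
    filter_eq', if_pos (mem_univ _), card_singleton, one_mul]

theorem degree_eq_degree_tail_of_isHub {n : ℕ} {v : Vert (n + 2)} (hv : IsHub v)
    (hr : v ≠ root (n + 2)) : (G (n + 2)).degree v = (G (n + 1)).degree (Fin.tail v) :=
  degree_eq_degree_tail hr (not_isLeaf_of_isHub (isHub_tail_iff.2 hv))

theorem ne_root_of_degree_eq {n i : ℕ} {v : Vert n} (hi : i < n)
    (hv : (G n).degree v = 2 ^ (i + 1) - 2) : v ≠ root n := by
  rintro rfl
  rw [degree_root] at hv
  exact hi.ne' (strictMono_two_pow_succ_sub_two.injective hv)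

theorem exists_degree_eq_of_isHub_of_ne_root : ∀ (n : ℕ) {v : Vert (n + 1)}, IsHub v →
    v ≠ root (n + 1) → ∃ i, 1 ≤ i ∧ i ≤ n ∧ (G (n + 1)).degree v = 2 ^ (i + 1) - 2
  | 0, _, hv, hr => absurd (eq_root_one_of_isHub hv) hr
  | n + 1, v, hv, hr => by
    rw [degree_eq_degree_tail_of_isHub hv hr]
    by_cases ht : Fin.tail v = root (n + 1)
    · exact ⟨n + 1, by omega, le_rfl, by rw [ht, degree_root]⟩
    · obtain ⟨i, hi, hin, hdeg⟩ :=
        exists_degree_eq_of_isHub_of_ne_root n (isHub_tail_iff.2 hv) ht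
      exact ⟨i, hi, by omega, hdeg⟩

theorem eq_root_of_isHub_of_degree_eq {n : ℕ} {v : Vert (n + 1)} (hv : IsHub v)
    (hdeg : (G (n + 1)).degree v = 2 ^ (n + 2) - 2) : v = root (n + 1) := by
  by_contra hr
  obtain ⟨i, -, hin, hi⟩ := exists_degree_eq_of_isHub_of_ne_root n hv hr
  rw [hi] at hdeg
  exact absurd (strictMono_two_pow_succ_sub_two.injective hdeg) (by omega)

theorem isHub_and_degree_eq_iff_tail {n i : ℕ} (hi : i ≤ n) (w : Vert (n + 2)) :
    IsHub w ∧ (G (n + 2)).degree w = 2 ^ (i + 1) - 2 ↔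
      IsHub (Fin.tail w) ∧ (G (n + 1)).degree (Fin.tail w) = 2 ^ (i + 1) - 2 := by
  rw [isHub_tail_iff]
  refine and_congr_right fun hv => ?_
  by_cases hr : w = root (n + 2)
  · subst hr
    exact iff_of_false (ne_root_of_degree_eq (by omega) · rfl)
      (ne_root_of_degree_eq (n := n + 1) (by omega) · rfl)
  · rw [degree_eq_degree_tail_of_isHub hv hr]

theorem isHub_and_degree_eq_iff_tail_eq_root {n : ℕ} (w : Vert (n + 2)) :
    IsHub w ∧ (G (n + 2)).degree w = 2 ^ (n + 2) - 2 ↔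
      w 0 ≠ 0 ∧ Fin.tail w = root (n + 1) := by
  constructor
  · rintro ⟨hv, hdeg⟩
    have hr : w ≠ root (n + 2) := ne_root_of_degree_eq (by omega) hdeg
    have ht : Fin.tail w = root (n + 1) := eq_root_of_isHub_of_degree_eq
      (isHub_tail_iff.2 hv) (by rwa [← degree_eq_degree_tail_of_isHub hv hr])
    exact ⟨fun h0 => hr (eq_root_iff.2 ⟨h0, ht⟩), ht⟩
  · rintro ⟨h0, ht⟩
    have hv : IsHub w := isHub_tail_iff.1 (ht ▸ root_isHub _)
    have hr : w ≠ root (n + 2) := fun h => h0 (eq_root_iff.1 h).1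
    exact ⟨hv, by rw [degree_eq_degree_tail_of_isHub hv hr, ht, degree_root]⟩

theorem card_isHub_degree_eq : ∀ (n i : ℕ), 1 ≤ i → i ≤ n →
    #{v : Vert (n + 1) | IsHub v ∧ (G (n + 1)).degree v = 2 ^ (i + 1) - 2} = 2 * 3 ^ (n - i)
  | 0, _, hi, hin => by omega
  | n + 1, i, hi, hin => by
    rcases hin.lt_or_eq with hlt | rfl
    · have hcopies (w : Vert (n + 2)) (_ : w ∈ univ) :=
        (isHub_and_degree_eq_iff_tail (by omega : i ≤ n) w).trans (true_and _).symm.to_iff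
      rw [filter_congr hcopies,
        Fin.card_filter_head_and_tail (fun _ => True)
          (fun u => IsHub u ∧ (G (n + 1)).degree u = 2 ^ (i + 1) - 2),
        card_isHub_degree_eq n i hi (by omega), filter_true, card_univ, Fintype.card_fin,
        show n + 1 - i = n - i + 1 by omega, pow_succ]
      ring
    · rw [filter_congr fun w _ => isHub_and_degree_eq_iff_tail_eq_root w,
        Fin.card_filter_head_and_tail (· ≠ 0) (· = root (n + 1)), filter_eq',
        if_pos (mem_univ _), card_singleton, Nat.sub_self]
      decide

end DSFN

open DSFN in
/-- For every `n ≥ 1`: for each `1 ≤ i ≤ n - 1` the number of hub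
vertices of `G n` of degree `2 ^ (i+1) - 2` is exactly `2 * 3 ^ (n-1-i)`; the root is
the unique hub vertex of degree `2 ^ (n+1) - 2`; and every hub vertex has degree
`2 ^ (i+1) - 2` for some `1 ≤ i ≤ n`. -/
theorem dsfn_hub_degree_distribution (n : ℕ) (hn : 1 ≤ n) :
    (∀ i : ℕ, 1 ≤ i → i ≤ n - 1 →
      (Finset.univ.filter
        (fun v : Vert n => IsHub v ∧ (G n).degree v = 2 ^ (i + 1) - 2)).card
        = 2 * 3 ^ (n - 1 - i)) ∧
    (Finset.univ.filter
        (fun v : Vert n => IsHub v ∧ (G n).degree v = 2 ^ (n + 1) - 2)) = {root n} ∧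
    (∀ v : Vert n, IsHub v →
      ∃ i : ℕ, 1 ≤ i ∧ i ≤ n ∧ (G n).degree v = 2 ^ (i + 1) - 2) := by
  obtain ⟨m, rfl⟩ : ∃ m, n = m + 1 := ⟨n - 1, by omega⟩
  refine ⟨fun i hi him => ?_, ?_, fun v hv => ?_⟩
  · simpa using card_isHub_degree_eq m i hi (by omega)
  · ext v
    simp only [mem_filter, mem_univ, true_and, mem_singleton]
    refine ⟨fun ⟨hv, hdeg⟩ => eq_root_of_isHub_of_degree_eq hv hdeg, ?_⟩
    rintro rfl
    exact ⟨root_isHub _, degree_root _⟩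
  · by_cases hr : v = root (m + 1)
    · exact ⟨m + 1, by omega, le_rfl, hr ▸ degree_root _⟩
    · obtain ⟨i, hi, him, hdeg⟩ := exists_degree_eq_of_isHub_of_ne_root m hv hr
      exact ⟨i, hi, by omega, hdeg⟩
end

section
/- For every natural number n ≥ 1, the following identity of natural numbers holds: n·2^n + Σ_{i=1}^{n−1} i·2^i·3^{n−1−i} = 2·(3^n − 2^n). (This is the sum Σ_{k ∈ leaf} k·P(k) of degrees over all rim vertices of the DSFN at generation n, which equals the total number of links L(n).) -/
lemma dsfn_aux (n : ℕ) :
    (n + 1) * 2 ^ (n + 1) + ∑ i ∈ Finset.Icc 1 n, i * 2 ^ i * 3 ^ (n - i)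
      = 2 * (3 ^ (n + 1) - 2 ^ (n + 1)) := by
  induction n with
  | zero => decide
  | succ n ih =>
    have hsum : ∑ i ∈ Finset.Icc 1 (n + 1), i * 2 ^ i * 3 ^ (n + 1 - i)
        = 3 * (∑ i ∈ Finset.Icc 1 n, i * 2 ^ i * 3 ^ (n - i)) + (n + 1) * 2 ^ (n + 1) := by
      rw [Finset.sum_Icc_succ_top (by omega), Finset.mul_sum]
      congr 1
      · refine Finset.sum_congr rfl fun i hi => ?_
        simp only [Finset.mem_Icc] at hi
        have h : n + 1 - i = (n - i) + 1 := by omega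
        rw [h]; ring
      · simp
    rw [hsum]
    have h1 : (2:ℕ) ^ (n + 1) ≤ 3 ^ (n + 1) := Nat.pow_le_pow_left (by norm_num) _
    have h2 : (2:ℕ) ^ (n + 2) ≤ 3 ^ (n + 2) := Nat.pow_le_pow_left (by norm_num) _
    have e3 : (3:ℕ) ^ (n + 2) = 3 * 3 ^ (n + 1) := by ring
    have e2 : (2:ℕ) ^ (n + 2) = 2 * 2 ^ (n + 1) := by ring
    have hd : (n + 1 + 1) * 2 ^ (n + 1 + 1) = 2 * ((n + 1) * 2 ^ (n + 1)) + 2 * 2 ^ (n + 1) := by ring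
    omega

/-- For every `n ≥ 1`, the identity of natural numbers
`n·2^n + Σ_{i=1}^{n-1} i·2^i·3^(n-1-i) = 2·(3^n − 2^n)` holds: the sum of degrees over
all rim vertices of the DSFN at generation `n` equals the total number of links
`L(n)`. -/
theorem dsfn_rim_degree_sum (n : ℕ) (hn : 1 ≤ n) :
    n * 2 ^ n + ∑ i ∈ Finset.Icc 1 (n - 1), i * 2 ^ i * 3 ^ (n - 1 - i)
      = 2 * (3 ^ n - 2 ^ n) := by
  obtain ⟨m, rfl⟩ := Nat.exists_eq_add_of_le hn
  rw [Nat.add_comm 1 m]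
  simpa using dsfn_aux m
end

section
/- For every natural number n ≥ 1, the second order average degree of the DSFN at generation n satisfies the exact identity of real numbers [(2^{n+1} − 2)^2 + 32·(4^{n−1} − 2·3^{n−1} + 2^{n−1}) + 4·(3^{n−1} − 1) + 2·(5·3^n − (2n+5)·2^n)] / (4·(3^n − 2^n)) = [3·(4/3)^n − (n + 1/2)·(2/3)^n − 5/2] / (1 − (2/3)^n); consequently, multiplying by (3/4)^n, this quantity divided by (4/3)^n tends to 3 as n → ∞, so the second order average degree diverges exponentially. -/
/-!
Collecting powers, `Σ k² P(k) = 12·4ⁿ − 10·3ⁿ − (4n + 2)·2ⁿ` for `n ≥ 1`. Dividing numerator and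
denominator of the average degree by `4·3ⁿ` gives the identity; after multiplying by `(3/4)ⁿ` the
numerator is `3 − (n + 1/2)(1/2)ⁿ − (5/2)(3/4)ⁿ` and the denominator `1 − (2/3)ⁿ`, so the limit is `3`.
-/

open Filter Topology

/-- `Σ_k k²·P(k)` at generation `n`; for `n = 0` the exponents `n - 1` truncate, so this is only
the paper's quantity for `n ≥ 1`. -/
noncomputable def dsfnSecondMoment (n : ℕ) : ℝ :=
  ((2 : ℝ) ^ (n + 1) - 2) ^ 2
    + 32 * ((4 : ℝ) ^ (n - 1) - 2 * 3 ^ (n - 1) + 2 ^ (n - 1))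
    + 4 * ((3 : ℝ) ^ (n - 1) - 1)
    + 2 * (5 * (3 : ℝ) ^ n - (2 * n + 5) * 2 ^ n)

/-- The denominator is `2·L(n)` with `L(n) = 2(3ⁿ − 2ⁿ)` links. -/
noncomputable def dsfnSecondOrderAverageDegree (n : ℕ) : ℝ :=
  dsfnSecondMoment n / (4 * ((3 : ℝ) ^ n - 2 ^ n))

theorem dsfnSecondMoment_eq {n : ℕ} (hn : 1 ≤ n) :
    dsfnSecondMoment n = 12 * 4 ^ n - 10 * 3 ^ n - (4 * n + 2) * 2 ^ n := by
  obtain ⟨m, rfl⟩ := Nat.exists_eq_add_of_le' hn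
  have h4 : ∀ k : ℕ, (4 : ℝ) ^ k = 2 ^ k * 2 ^ k := fun k => by rw [← mul_pow]; norm_num
  simp only [dsfnSecondMoment, Nat.add_sub_cancel, h4]
  push_cast
  ring

theorem div_sub_eq_div_div_one_sub_div {K : Type*} [Field K] (x y : K) {w : K} (hw : w ≠ 0) :
    x / (w - y) = (x / w) / (1 - y / w) := by
  rw [one_sub_div hw, div_div_div_cancel_right₀ hw]

theorem dsfnSecondOrderAverageDegree_eq {n : ℕ} (hn : 1 ≤ n) :
    dsfnSecondOrderAverageDegree n
      = (3 * ((4 : ℝ) / 3) ^ n - ((n : ℝ) + 1 / 2) * ((2 : ℝ) / 3) ^ n - 5 / 2)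
        / (1 - ((2 : ℝ) / 3) ^ n) := by
  have h3 : (3 : ℝ) ^ n ≠ 0 := by positivity
  calc dsfnSecondOrderAverageDegree n
      = (3 * 4 ^ n - 5 / 2 * 3 ^ n - (n + 1 / 2) * 2 ^ n) / (3 ^ n - 2 ^ n) := by
        rw [dsfnSecondOrderAverageDegree, dsfnSecondMoment_eq hn,
          ← mul_div_mul_left _ (3 ^ n - 2 ^ n : ℝ) (four_ne_zero' ℝ)]
        ring_nf
    _ = _ := by
        rw [div_sub_eq_div_div_one_sub_div _ _ h3]
        simp only [div_pow]
        field_simp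
        ring

theorem dsfnSecondOrderAverageDegree_mul_eq {n : ℕ} (hn : 1 ≤ n) :
    dsfnSecondOrderAverageDegree n * (3 / 4 : ℝ) ^ n
      = (3 - (n + 1 / 2) * (1 / 2 : ℝ) ^ n - 5 / 2 * (3 / 4 : ℝ) ^ n) / (1 - (2 / 3 : ℝ) ^ n) := by
  rw [dsfnSecondOrderAverageDegree_eq hn, div_mul_eq_mul_div]
  congr 1
  have h43 : ((4 : ℝ) / 3) ^ n * (3 / 4) ^ n = 1 := by rw [← mul_pow]; norm_num
  have h23 : ((2 : ℝ) / 3) ^ n * (3 / 4) ^ n = (1 / 2) ^ n := by rw [← mul_pow]; norm_num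
  linear_combination 3 * h43 - (n + 1 / 2 : ℝ) * h23

theorem tendsto_dsfnSecondOrderAverageDegree_mul :
    Tendsto (fun n => dsfnSecondOrderAverageDegree n * (3 / 4 : ℝ) ^ n) atTop (𝓝 3) := by
  have h12 : Tendsto (fun n : ℕ => (1 / 2 : ℝ) ^ n) atTop (𝓝 0) :=
    tendsto_pow_atTop_nhds_zero_of_lt_one (by norm_num) (by norm_num)
  have h34 : Tendsto (fun n : ℕ => (3 / 4 : ℝ) ^ n) atTop (𝓝 0) :=
    tendsto_pow_atTop_nhds_zero_of_lt_one (by norm_num) (by norm_num)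
  have hn12 : Tendsto (fun n : ℕ => n * (1 / 2 : ℝ) ^ n) atTop (𝓝 0) :=
    tendsto_self_mul_const_pow_of_lt_one (by norm_num) (by norm_num)
  have hnum : Tendsto (fun n : ℕ => 3 - (n + 1 / 2) * (1 / 2 : ℝ) ^ n - 5 / 2 * (3 / 4 : ℝ) ^ n)
      atTop (𝓝 (3 - (0 + 1 / 2 * 0) - 5 / 2 * 0)) :=
    ((tendsto_const_nhds.sub (hn12.add (h12.const_mul _))).sub (h34.const_mul _)).congr
      fun n => by ring
  have hden : Tendsto (fun n : ℕ => 1 - (2 / 3 : ℝ) ^ n) atTop (𝓝 (1 - 0)) :=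
    tendsto_const_nhds.sub (tendsto_pow_atTop_nhds_zero_of_lt_one (by norm_num) (by norm_num))
  have hlim : (3 - (0 + 1 / 2 * 0) - 5 / 2 * 0) / (1 - 0) = (3 : ℝ) := by norm_num
  refine (hlim ▸ hnum.div hden (by norm_num)).congr' ?_
  filter_upwards [eventually_ge_atTop 1] with n hn
  exact (dsfnSecondOrderAverageDegree_mul_eq hn).symm

/-- For every `n ≥ 1`, the second order average degree of the DSFN
at generation `n` satisfies the exact identity of real numbers
`[(2^(n+1) − 2)² + 32·(4^(n-1) − 2·3^(n-1) + 2^(n-1)) + 4·(3^(n-1) − 1)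
  + 2·(5·3^n − (2n+5)·2^n)] / (4·(3^n − 2^n))
 = [3·(4/3)^n − (n + 1/2)·(2/3)^n − 5/2] / (1 − (2/3)^n)`;
consequently, multiplying by `(3/4)^n`, this quantity divided by `(4/3)^n` tends to `3`
as `n → ∞`, so the second order average degree diverges exponentially. -/
theorem dsfn_second_order_average_degree :
    (∀ n : ℕ, 1 ≤ n →
      (((2 : ℝ) ^ (n + 1) - 2) ^ 2
          + 32 * ((4 : ℝ) ^ (n - 1) - 2 * 3 ^ (n - 1) + 2 ^ (n - 1))
          + 4 * ((3 : ℝ) ^ (n - 1) - 1)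
          + 2 * (5 * (3 : ℝ) ^ n - (2 * n + 5) * 2 ^ n))
        / (4 * ((3 : ℝ) ^ n - 2 ^ n))
      = (3 * ((4 : ℝ) / 3) ^ n - ((n : ℝ) + 1 / 2) * ((2 : ℝ) / 3) ^ n - 5 / 2)
        / (1 - ((2 : ℝ) / 3) ^ n)) ∧
    Filter.Tendsto
      (fun n : ℕ =>
        (((2 : ℝ) ^ (n + 1) - 2) ^ 2
            + 32 * ((4 : ℝ) ^ (n - 1) - 2 * 3 ^ (n - 1) + 2 ^ (n - 1))
            + 4 * ((3 : ℝ) ^ (n - 1) - 1)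
            + 2 * (5 * (3 : ℝ) ^ n - (2 * n + 5) * 2 ^ n))
          / (4 * ((3 : ℝ) ^ n - 2 ^ n)) * ((3 : ℝ) / 4) ^ n)
      Filter.atTop (nhds 3) :=
  ⟨fun _ hn => dsfnSecondOrderAverageDegree_eq hn, tendsto_dsfnSecondOrderAverageDegree_mul⟩
end
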